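/- Let B be a finite field with q = |B| elements, let F be a field extension of B of degree t, and let W ⊆ F be a B-linear subspace of dimension s with 0 < s < t. Let ℓ, d, k be positive integers with ℓ ≤ k ≤ ℓ + d and d ≥ ℓ·q^{s} − ℓ + k. Let β_1, …, β_ℓ, α_1, …, α_d be ℓ + d pairwise distinct elements of F and let κ_1, …, κ_ℓ ∈ F be nonzero. Then there exist B-linear maps g_1, …, g_d : F → B^{t−s} and a B-linear map h : (B^{t−s})^d → F such that for every polynomial f ∈ F[x] with deg f ≤ k − 1, h(g_1(f(α_1)), …, g_d(f(α_d))) = ∑_{i=1}^ℓ κ_i f(β_i). That is, the Reed–Solomon code RS({β_1,…,β_ℓ,α_1,…,α_d}, k) admits a B-linear weighted-sum evaluation scheme with bandwidth d(t − s) sub-symbols of B. -/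

import Mathlib

/-!
The subspace polynomial `L(x) = ∏_{w ∈ W} (x - w)` is `B`-linear because `|W| = q^s`, and it
vanishes on `W`, so its image has dimension at most `t - s`. Write `L = X * M` and
`π = ∏ (X - β_i)`. For `r` of degree `< ℓ` with suitable values at the `β_i`, the polynomial
`γ r M(γ π) f` has degree `< ℓ + d - 1`, so the dual Reed–Solomon identity `∑_m u_m P(v_m) = 0`
(`u` the nodal weights of all `ℓ + d` points) gives
`γ · ∑ κ_i f(β_i) = - ∑_j c_j L(γ π(α_j)) f(α_j)` with `c` independent of `γ` and `f`.
Hence `Tr(γ · ∑ κ_i f(β_i))` is a `B`-linear combination of the numbers `Tr(c_j z_r f(α_j))`,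
where `z_1, …, z_{t-s}` span the image of `L`, and the nondegeneracy of the trace form lets `h`
recover the weighted sum from them.
-/

open Finset Polynomial Lagrange

theorem Polynomial.natDegree_le_sub_one_of_degree_lt {R : Type*} [Semiring R] {p : R[X]} {n : ℕ}
    (h : p.degree < n) : p.natDegree ≤ n - 1 := by
  rcases eq_or_ne p 0 with rfl | hp
  · simp
  · exact Nat.le_sub_one_of_lt ((natDegree_lt_iff_degree_lt hp).mpr h)

namespace Lagrange

variable {F ι : Type*} [Field F] {s : Finset ι} {v : ι → F}

theorem sum_nodalWeight_mul_eval_eq_zero [DecidableEq ι] (hvs : Set.InjOn v s) {P : F[X]}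
    (hP : P.degree < ↑(#s - 1)) : ∑ i ∈ s, nodalWeight s v i * P.eval (v i) = 0 := by
  -- compare the coefficients of degree `#s - 1` in the Lagrange interpolation of `P`
  have hPs : P.degree < #s := hP.trans_le (by exact_mod_cast Nat.sub_le _ _)
  have hcoeff := congrArg (coeff · (#s - 1)) (eq_interpolate hvs hPs)
  have hnodal : ∀ i ∈ s, (nodal s v / (X - C (v i))).coeff (#s - 1) = 1 := fun i hi => by
    rw [← nodal_erase_eq_nodal_div hi, ← card_erase_of_mem hi, ← natDegree_nodal (R := F)]
    exact nodal_monic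
  simp only [coeff_eq_zero_of_degree_lt hP, interpolate_eq_nodalWeight_mul_nodal_div_X_sub_C,
    finsetSum_coeff, coeff_mul_C, coeff_C_mul] at hcoeff
  rw [hcoeff]
  exact sum_congr rfl fun i hi => by rw [hnodal i hi, mul_one]

theorem natDegree_comp_C_mul_nodal_le (M : F[X]) (γ : F) :
    (M.comp (C γ * nodal s v)).natDegree ≤ M.natDegree * #s :=
  natDegree_comp_le.trans <| Nat.mul_le_mul_left _ <|
    (natDegree_C_mul_le _ _).trans natDegree_nodal.le

end Lagrange

namespace Submodule

variable {B F : Type*} [Field B] [Field F] [Algebra B F] (W : Submodule B F) [Fintype W]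

noncomputable def subspacePoly : F[X] := ∏ w : W, (X - C (w : F))

theorem isMonicOfDegree_subspacePoly : IsMonicOfDegree W.subspacePoly (Fintype.card W) :=
  ⟨by simp [subspacePoly], monic_prod_of_monic _ _ fun _ _ => monic_X_sub_C _⟩

theorem exists_subspacePoly_eq_X_mul : ∃ M : F[X], W.subspacePoly = X * M ∧ M.eval 0 ≠ 0 := by
  classical
  refine ⟨∏ w ∈ univ.erase (0 : W), (X - C (w : F)), ?_, ?_⟩
  · rw [subspacePoly, ← mul_prod_erase univ _ (mem_univ 0)]
    simp
  · simp [eval_prod, prod_ne_zero_iff]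

theorem eval_subspacePoly_of_mem {w : F} (hw : w ∈ W) : W.subspacePoly.eval w = 0 := by
  rw [subspacePoly, eval_prod]
  exact prod_eq_zero (mem_univ ⟨w, hw⟩) (by simp)

theorem eval_add_mem_subspacePoly (x : F) {w : F} (hw : w ∈ W) :
    W.subspacePoly.eval (x + w) = W.subspacePoly.eval x := by
  simp only [subspacePoly, eval_prod, eval_sub, eval_X, eval_C]
  exact Fintype.prod_equiv (Equiv.subRight ⟨w, hw⟩) _ _ fun w' => by simp; ring

theorem eval_add_subspacePoly (x y : F) :
    W.subspacePoly.eval (x + y) = W.subspacePoly.eval x + W.subspacePoly.eval y := by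
  -- `L(X + y) - L(y)` and `L` are monic of degree `|W|` and agree on `W`
  set L := W.subspacePoly
  have hL := W.isMonicOfDegree_subspacePoly
  have hn : Fintype.card W ≠ 0 := Fintype.card_ne_zero
  have hshift : L.comp (X + C y) - C (L.eval y) = L := by
    refine eq_of_degree_sub_lt_of_eval_index_eq (s := univ) (v := ((↑) : W → F))
      Subtype.val_injective.injOn ?_ fun w _ => ?_
    · have := ((mul_one (Fintype.card W)) ▸ hL.comp one_ne_zero (isMonicOfDegree_X_add_one y)
        |>.sub (q := C (L.eval y)) (by simpa using Nat.pos_of_ne_zero hn)).natDegree_sub_lt hn hL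
      rw [card_univ]
      exact degree_le_natDegree.trans_lt (by exact_mod_cast this)
    · simp [L, add_comm (w : F), eval_add_mem_subspacePoly W y w.2, eval_subspacePoly_of_mem W w.2]
  have := congrArg (eval x) hshift
  simp only [eval_sub, eval_comp, eval_add, eval_X, eval_C] at this
  linear_combination this

theorem eval_smul_subspacePoly [Fintype B] {m : ℕ} (hW : Fintype.card W = Fintype.card B ^ m)
    (c : B) (x : F) : W.subspacePoly.eval (c • x) = c • W.subspacePoly.eval x := by
  -- multiplication by `c ≠ 0` permutes `W`, and `c ^ |W| = c` as `|W|` is a power of `|B|`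
  rcases eq_or_ne c 0 with rfl | hc
  · simp [eval_subspacePoly_of_mem W W.zero_mem]
  have : ∏ w : W, (c • x - w) = ∏ w : W, c • (x - w) :=
    (Fintype.prod_equiv (LinearEquiv.smulOfNeZero B W c hc).toEquiv _ _
      fun w => by simp [smul_sub]).symm
  simp only [subspacePoly, eval_prod, eval_sub, eval_X, eval_C, this, prod_smul]
  rw [prod_const, card_univ, hW, FiniteField.pow_card_pow]

@[simps]
noncomputable def subspacePolyLinearMap [Fintype B] : F →ₗ[B] F where
  toFun x := W.subspacePoly.eval x
  map_add' := W.eval_add_subspacePoly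
  map_smul' := W.eval_smul_subspacePoly (Module.card_eq_pow_finrank (K := B) (V := W))

theorem finrank_range_subspacePolyLinearMap_add_le [Fintype B] [FiniteDimensional B F] :
    Module.finrank B (LinearMap.range W.subspacePolyLinearMap) + Module.finrank B W ≤
      Module.finrank B F := by
  have hW : W ≤ LinearMap.ker W.subspacePolyLinearMap := fun _ hw =>
    W.eval_subspacePoly_of_mem hw
  have := LinearMap.finrank_range_add_finrank_ker W.subspacePolyLinearMap
  have := Submodule.finrank_mono hW
  omega

end Submodule

theorem Submodule.exists_fin_le_span_of_finrank_le {K V : Type*} [DivisionRing K]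
    [AddCommGroup V] [Module K V] (p : Submodule K V) [FiniteDimensional K p] {n : ℕ}
    (h : Module.finrank K p ≤ n) : ∃ z : Fin n → V, p ≤ span K (Set.range z) := by
  let b := Module.finBasis K p
  refine ⟨Function.extend (Fin.castLE h) (fun i => (b i : V)) 0, fun x hx => ?_⟩
  have hsum := congrArg Subtype.val (b.sum_repr ⟨x, hx⟩)
  push_cast at hsum
  rw [← hsum]
  refine sum_mem fun i _ => smul_mem _ _ (subset_span ⟨Fin.castLE h i, ?_⟩)
  exact (Fin.castLE_injective h).extend_apply _ _ i

namespace LinearMap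

variable {K V V₁ V₂ : Type*} [DivisionRing K] [AddCommGroup V] [Module K V]
  [AddCommGroup V₁] [Module K V₁] [AddCommGroup V₂] [Module K V₂]

theorem exists_comp_eq_of_ker_le (f : V →ₗ[K] V₁) (g : V →ₗ[K] V₂) (h : ker f ≤ ker g) :
    ∃ e : V₁ →ₗ[K] V₂, e ∘ₗ f = g := by
  obtain ⟨f', hf'⟩ := (ker f).liftQ f le_rfl |>.exists_leftInverse_of_injective
    (Submodule.ker_liftQ_eq_bot' _ _ rfl)
  refine ⟨(ker f).liftQ g h ∘ₗ f', LinearMap.ext fun x => ?_⟩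
  have := LinearMap.congr_fun hf' (Submodule.Quotient.mk x)
  simp only [coe_comp, Function.comp_apply, Submodule.liftQ_apply, id_coe, id_eq] at this ⊢
  rw [this, Submodule.liftQ_apply]

theorem exists_apply_eq_of_forall_mem (f : V →ₗ[K] V₁) (g : V →ₗ[K] V₂) (p : Submodule K V)
    (h : ∀ x ∈ p, f x = 0 → g x = 0) : ∃ e : V₁ →ₗ[K] V₂, ∀ x ∈ p, e (f x) = g x := by
  obtain ⟨e, he⟩ := exists_comp_eq_of_ker_le (f ∘ₗ p.subtype) (g ∘ₗ p.subtype)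
    fun x hx => h x x.2 hx
  exact ⟨e, fun x hx => LinearMap.congr_fun he ⟨x, hx⟩⟩

end LinearMap

section EvaluationScheme

variable {F : Type*} [Field F] {ℓ d k : ℕ} {β : Fin ℓ → F} {α : Fin d → F}

theorem exists_mul_sum_eq_neg_sum_eval_nodal (hinj : Function.Injective (Sum.elim β α))
    (κ : Fin ℓ → F) {M : F[X]} (hM0 : M.eval 0 ≠ 0) (hℓ : 0 < ℓ) (hk : 0 < k)
    (hdeg : ℓ * M.natDegree + k ≤ d) :
    ∃ c : Fin d → F, ∀ (γ : F) (f : F[X]), f.degree < k →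
      γ * ∑ i, κ i * f.eval (β i) =
        -∑ j, c j * (X * M).eval (γ * (nodal univ β).eval (α j)) * f.eval (α j) := by
  set u := nodalWeight univ (Sum.elim β α)
  set π := nodal univ β
  set r := interpolate univ β fun i => κ i / (u (.inl i) * M.eval 0)
  have hβ : Function.Injective β := hinj.comp Sum.inl_injective
  have hπ : ∀ j, π.eval (α j) ≠ 0 := fun j =>
    eval_nodal_not_at_node fun i _ h => Sum.inr_ne_inl (hinj h)
  refine ⟨fun j => u (.inr j) * r.eval (α j) / π.eval (α j), fun γ f hf => ?_⟩
  -- at `β i` the factor `M(γ π)` is `M(0)`; at `α j` it is `L(γ π(α j)) / (γ π(α j))`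
  set P := C γ * r * M.comp (C γ * π) * f
  have hP : P.degree < ↑(#(univ : Finset (Fin ℓ ⊕ Fin d)) - 1) := by
    have hr : r.natDegree ≤ ℓ - 1 := natDegree_le_of_degree_le <| by
      simpa only [card_univ, Fintype.card_fin] using degree_interpolate_le (s := univ) _ hβ.injOn
    have hMπ := natDegree_comp_C_mul_nodal_le (s := univ) (v := β) M γ
    rw [card_univ, Fintype.card_fin] at hMπ
    refine degree_le_natDegree.trans_lt (WithBot.coe_lt_coe.mpr ?_)
    calc P.natDegree ≤ (ℓ - 1) + M.natDegree * ℓ + (k - 1) :=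
          natDegree_mul_le.trans (add_le_add (natDegree_mul_le.trans (add_le_add
            ((natDegree_C_mul_le _ _).trans hr) hMπ)) (natDegree_le_sub_one_of_degree_lt hf))
      _ < #(univ : Finset (Fin ℓ ⊕ Fin d)) - 1 := by
          simp only [card_univ, Fintype.card_sum, Fintype.card_fin]
          rw [Nat.mul_comm] at hdeg
          omega
  have hsum : ∑ m, u m * P.eval (Sum.elim β α m) = 0 :=
    sum_nodalWeight_mul_eval_eq_zero hinj.injOn hP
  rw [Fintype.sum_sum_type] at hsum
  rw [eq_neg_iff_add_eq_zero, ← hsum, mul_sum]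
  congr 1 <;> refine sum_congr rfl fun i _ => ?_
  · have hr : r.eval (β i) = κ i / (u (.inl i) * M.eval 0) :=
      eval_interpolate_at_node _ hβ.injOn (mem_univ i)
    simp only [P, π, Sum.elim_inl, eval_mul, eval_C, eval_comp, eval_nodal_at_node (mem_univ i),
      mul_zero, hr]
    have : u (.inl i) ≠ 0 := nodalWeight_ne_zero hinj.injOn (mem_univ _)
    field_simp
  · simp only [P, Sum.elim_inr, eval_mul, eval_C, eval_comp, eval_X]
    have := hπ i
    field_simp

theorem exists_evaluation_scheme_of_mul_sum_eq {B ι : Type*} [Field B] [Algebra B F]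
    [FiniteDimensional B F] [Algebra.IsSeparable B F] (κ : Fin ℓ → F) (ℒ : F →ₗ[B] F)
    {z : ι → F} (hz : LinearMap.range ℒ ≤ Submodule.span B (Set.range z)) (a c : Fin d → F)
    (hc : ∀ (γ : F) (f : F[X]), f.degree < k →
      γ * ∑ i, κ i * f.eval (β i) = -∑ j, c j * ℒ (γ * a j) * f.eval (α j)) :
    ∃ (g : Fin d → F →ₗ[B] ι → B) (h : (Fin d → ι → B) →ₗ[B] F),
      ∀ f : F[X], f.degree < k → h (fun j => g j (f.eval (α j))) = ∑ i, κ i * f.eval (β i) := by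
  let g : Fin d → F →ₗ[B] ι → B := fun j =>
    LinearMap.pi fun r => Algebra.trace B F ∘ₗ LinearMap.mulLeft B (c j * z r)
  let Φ : F[X] →ₗ[B] Fin d → ι → B := LinearMap.pi fun j => g j ∘ₗ (leval (α j)).restrictScalars B
  let T : F[X] →ₗ[B] F := (∑ i, κ i • leval (β i)).restrictScalars B
  have hker : ∀ f ∈ (degreeLT F k).restrictScalars B, Φ f = 0 → T f = 0 := by
    intro f hf hzero
    have hS : ∀ γ, Algebra.trace B F (γ * ∑ i, κ i * f.eval (β i)) = 0 := by
      intro γ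
      rw [hc γ f (mem_degreeLT.mp hf), map_neg, map_sum, neg_eq_zero]
      refine sum_eq_zero fun j _ => ?_
      let ψ := Algebra.trace B F ∘ₗ LinearMap.mulRight B (f.eval (α j)) ∘ₗ
        LinearMap.mulLeft B (c j)
      have hψ : Set.EqOn ψ (0 : F →ₗ[B] B) (Set.range z) := by
        rintro _ ⟨r, rfl⟩
        simpa [ψ, Φ, g, mul_assoc] using congrFun (congrFun hzero j) r
      exact LinearMap.eqOn_span' hψ (hz (LinearMap.mem_range_self ℒ _))
    simpa [T] using (traceForm_nondegenerate B F).2 _ hS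
  obtain ⟨h, hh⟩ := LinearMap.exists_apply_eq_of_forall_mem Φ T _ hker
  refine ⟨g, h, fun f hf => ?_⟩
  rw [show (fun j => g j (f.eval (α j))) = Φ f from rfl, hh f (mem_degreeLT.mpr hf)]
  simp [T]

end EvaluationScheme

theorem scheme2_exists_evaluation_scheme_general {B F : Type*} [Field B] [Fintype B]
    [Field F] [Algebra B F]
    (t s : ℕ) (ht : Module.finrank B F = t)
    (W : Submodule B F) (hWs : Module.finrank B W = s) (hst : s < t)
    (ℓ d k : ℕ) (hℓ : 0 < ℓ) (hk : 0 < k)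
    (hdbig : ℓ * Fintype.card B ^ s - ℓ + k ≤ d)
    (β : Fin ℓ → F) (α : Fin d → F)
    (hinj : Function.Injective (Sum.elim β α))
    (κ : Fin ℓ → F) :
    ∃ (g : Fin d → (F →ₗ[B] (Fin (t - s) → B))) (h : (Fin d → Fin (t - s) → B) →ₗ[B] F),
      ∀ f : Polynomial F, f.degree < (k : WithBot ℕ) →
        h (fun j => g j (f.eval (α j))) = ∑ i, κ i * f.eval (β i) := by
  have : FiniteDimensional B F := .of_finrank_pos (by omega)
  have : Finite F := Module.finite_of_finite B
  have : Fintype W := Fintype.ofFinite W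
  obtain ⟨M, hLM, hM0⟩ := W.exists_subspacePoly_eq_X_mul
  have hM : ℓ * M.natDegree + k ≤ d := by
    have hdegL := W.isMonicOfDegree_subspacePoly.natDegree_eq
    rw [hLM, natDegree_X_mul (fun h => hM0 (by simp [h])), Module.card_eq_pow_finrank (K := B),
      hWs] at hdegL
    rw [← hdegL, Nat.mul_add_one] at hdbig
    omega
  obtain ⟨c, hc⟩ := exists_mul_sum_eq_neg_sum_eval_nodal hinj κ hM0 hℓ hk hM
  obtain ⟨z, hz⟩ := (LinearMap.range W.subspacePolyLinearMap).exists_fin_le_span_of_finrank_le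
    (n := t - s) (by have := W.finrank_range_subspacePolyLinearMap_add_le; omega)
  refine exists_evaluation_scheme_of_mul_sum_eq κ _ hz (fun j => (nodal univ β).eval (α j)) c
    fun γ f hf => ?_
  simpa [hLM] using hc γ f hf

/-- Scheme 2 as an evaluation scheme: if `W ⊆ F` is a `B`-subspace of dimension `s`
(`0 < s < t`) and `d ≥ ℓ q^s - ℓ + k`, the Reed–Solomon code on the `ℓ + d` distinct
points `β 1, …, β ℓ, α 1, …, α d` admits a `B`-linear weighted-sum evaluation scheme
with bandwidth `d (t - s)` sub-symbols of `B`: there are `B`-linear maps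
`g_j : F → B^{t-s}` and a `B`-linear `h : (B^{t-s})^d → F` with
`h (g_1 (f α_1), …, g_d (f α_d)) = ∑_i κ_i f(β_i)` for all `f` of degree `≤ k - 1`. -/
theorem scheme2_exists_evaluation_scheme {B F : Type*} [Field B] [Fintype B]
    [Field F] [Algebra B F]
    (t s : ℕ) (ht : Module.finrank B F = t)
    (W : Submodule B F) (hWs : Module.finrank B W = s) (hs0 : 0 < s) (hst : s < t)
    (ℓ d k : ℕ) (hℓ : 0 < ℓ) (hd : 0 < d) (hk : 0 < k)
    (hℓk : ℓ ≤ k) (hkℓd : k ≤ ℓ + d)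
    (hdbig : ℓ * Fintype.card B ^ s - ℓ + k ≤ d)
    (β : Fin ℓ → F) (α : Fin d → F)
    (hinj : Function.Injective (Sum.elim β α))
    (κ : Fin ℓ → F) (hκ : ∀ i, κ i ≠ 0) :
    ∃ (g : Fin d → (F →ₗ[B] (Fin (t - s) → B))) (h : (Fin d → Fin (t - s) → B) →ₗ[B] F),
      ∀ f : Polynomial F, f.degree < (k : WithBot ℕ) →
        h (fun j => g j (f.eval (α j))) = ∑ i, κ i * f.eval (β i) :=
  scheme2_exists_evaluation_scheme_general t s ht W hWs hst ℓ d k hℓ hk hdbig β α hinj κ
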